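/- The function q satisfies: q(0) = 0; q(n) = 1 whenever n = 1 or 3^k ≤ n ≤ 2·3^k for some k; and for 2·3^k < n ≤ 3^(k+1), q(n) = min(1 + q(n − 2·3^k), 1 + q(3^(k+1) − n)). -/

import Mathlib

/-- A palindrome: a word equal to its reversal. -/
def IsPal {α : Type*} (w : List α) : Prop := w.reverse = w

/-- Palindromic length: the minimal number of palindromes whose concatenation is `w`. -/
noncomputable def PL {α : Type*} (w : List α) : ℕ :=
  sInf {k | ∃ l : List (List α), l.length = k ∧ (∀ p ∈ l, IsPal p) ∧ l.flatten = w}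


/-- The morphism φ : a → aba, b → bbb, with a = false, b = true. -/
def phi (w : List Bool) : List Bool :=
  w.flatMap fun c => if c then [true, true, true] else [false, true, false]

/-- The Sierpinski word, fixed point of φ starting with a: its (n+1)-st letter. -/
def sW (n : ℕ) : Bool := (phi^[n+1] [false]).getD n true

/-- The prefix s[1..n] of the Sierpinski word. -/
def sPrefix (n : ℕ) : List Bool := (List.range n).map sW

/-- qⱼ(n) = PL(bʲ s[1..n]). -/
noncomputable def qj (j n : ℕ) : ℕ := PL (List.replicate j true ++ sPrefix n)

/-- q(n) = min over j of qⱼ(n). -/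
noncomputable def qS (n : ℕ) : ℕ := sInf (Set.range fun j => qj j n)

/-- p(n) = PL(s[1..n]), the prefix palindromic length of the Sierpinski word. -/
noncomputable def pS (n : ℕ) : ℕ := PL (sPrefix n)

/-!
Let `qRec` be the function defined by the recursion. The letter `b` occurs in `s` exactly at the
positions whose ternary expansion contains a `1`, so `s[0..3^(k+1)) = u bᴮ u` with `B = 3^k` and
`u = s[0..B)` a palindrome. This self-similarity gives `q ≤ qRec` through explicit
factorisations: `bᴮ⁻ʲ u bᴮ⁻ʲ · bʲ s[0..m)` for `n = 2B + m`, and `bʲ s[0..t) · s[t..n)` for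
`t = 3B - n`, where `s[t..n)` is a palindrome centred in `u bᴮ u`.

For `qRec ≤ q`, look at the last palindrome of a factorisation of `bʲ s[0..n)`. Either it is a
factor `s[x..n)`, and then `qRec x` and `qRec n` differ by at most one (induction on `k` with
a case analysis on where `x` and `n` fall among the thirds of `s[0..3B)`), or it is `bᵉ s[0..n)`
with `e > 0`, which forces `n = 0` or `3^k ≤ n ≤ 2·3^k`, hence `qRec n ≤ 1`.
-/

lemma length_phi (w : List Bool) : (phi w).length = 3 * w.length := by
  induction w with
  | nil => rfl
  | cons c w ih =>
    simp only [phi, List.flatMap_cons, List.length_append] at *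
    cases c <;> simp [ih] <;> ring

lemma length_iterate_phi (m : ℕ) : (phi^[m] [false]).length = 3 ^ m := by
  induction m with
  | zero => rfl
  | succ m ih => rw [Function.iterate_succ_apply', length_phi, ih, pow_succ, mul_comm]

lemma getD_phi (w : List Bool) (i : ℕ) (h : i < 3 * w.length) :
    (phi w).getD i true = (w.getD (i / 3) true || i % 3 == 1) := by
  induction w generalizing i with
  | nil => simp at h
  | cons c w ih =>
    simp only [phi, List.flatMap_cons]
    rcases Nat.lt_or_ge i 3 with hi | hi
    · interval_cases i <;> cases c <;> rfl
    · have hblock : (if c = true then [true, true, true] else [false, true, false]).length = 3 := by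
        cases c <;> rfl
      obtain ⟨i, rfl⟩ : ∃ i', i = i' + 3 := ⟨i - 3, by omega⟩
      have hrec := ih i (by simp at h; omega)
      simp only [phi] at hrec
      rw [List.getD_append_right _ _ _ _ (by omega), hblock, Nat.add_sub_cancel, hrec,
        show (i + 3) / 3 = i / 3 + 1 by omega, show (i + 3) % 3 = i % 3 by omega]
      simp

lemma one_mem_digits_three_iff (n : ℕ) :
    1 ∈ Nat.digits 3 n ↔ 1 ∈ Nat.digits 3 (n / 3) ∨ n % 3 = 1 := by
  rcases Nat.eq_zero_or_pos n with rfl | hn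
  · simp
  · rw [Nat.digits_def' (by norm_num) hn, List.mem_cons, eq_comm, or_comm]

lemma getD_iterate_phi (m i : ℕ) (h : i < 3 ^ m) :
    (phi^[m] [false]).getD i true = decide (1 ∈ Nat.digits 3 i) := by
  induction m generalizing i with
  | zero =>
    obtain rfl : i = 0 := by simpa using h
    rfl
  | succ m ih =>
    rw [pow_succ] at h
    rw [Function.iterate_succ_apply', getD_phi _ _ (by rw [length_iterate_phi]; omega),
      ih _ (by omega)]
    simp only [one_mem_digits_three_iff i, Bool.decide_or, Bool.beq_eq_decide_eq]

lemma sW_eq_decide (n : ℕ) : sW n = decide (1 ∈ Nat.digits 3 n) :=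
  getD_iterate_phi _ _ ((Nat.lt_pow_self (by norm_num)).trans (Nat.pow_lt_pow_right (by norm_num) n.lt_succ_self))

lemma sW_zero : sW 0 = false := by
  rw [sW_eq_decide]; rfl

lemma sW_eq (n : ℕ) : sW n = (sW (n / 3) || n % 3 == 1) := by
  simp only [sW_eq_decide, one_mem_digits_three_iff n, Bool.decide_or, Bool.beq_eq_decide_eq]

lemma sW_two_mul_pow_add (k i : ℕ) (hi : i < 3 ^ k) : sW (2 * 3 ^ k + i) = sW i := by
  induction k generalizing i with
  | zero =>
    obtain rfl : i = 0 := by simpa using hi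
    rw [sW_eq]; rfl
  | succ k ih =>
    rw [pow_succ] at hi
    rw [sW_eq, sW_eq i, pow_succ, show (2 * (3 ^ k * 3) + i) / 3 = 2 * 3 ^ k + i / 3 by omega,
      show (2 * (3 ^ k * 3) + i) % 3 = i % 3 by omega, ih _ (by omega)]

lemma sW_of_mem_middle_third (k i : ℕ) (h1 : 3 ^ k ≤ i) (h2 : i < 2 * 3 ^ k) : sW i = true := by
  induction k generalizing i with
  | zero =>
    obtain rfl : i = 1 := by simp at h1 h2; omega
    rw [sW_eq]; rfl
  | succ k ih =>
    rw [pow_succ] at h1 h2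
    rw [sW_eq, ih (i / 3) (by omega) (by omega), Bool.true_or]

lemma sW_pow_sub_one_sub (k i : ℕ) (hi : i < 3 ^ k) : sW (3 ^ k - 1 - i) = sW i := by
  induction k generalizing i with
  | zero =>
    obtain rfl : i = 0 := by simpa using hi
    rfl
  | succ k ih =>
    rw [pow_succ] at hi ⊢
    have hdiv : (3 ^ k * 3 - 1 - i) / 3 = 3 ^ k - 1 - i / 3 := by omega
    have hmod : (3 ^ k * 3 - 1 - i) % 3 = 2 - i % 3 := by omega
    rw [sW_eq, sW_eq i, hdiv, hmod, ih _ (by omega)]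
    have : i % 3 < 3 := Nat.mod_lt _ (by norm_num)
    interval_cases i % 3 <;> rfl

lemma sW_pow_sub_one (k : ℕ) : sW (3 ^ k - 1) = false := by
  simpa [sW_zero] using sW_pow_sub_one_sub k 0 (by positivity)

lemma sW_two_mul_pow (k : ℕ) : sW (2 * 3 ^ k) = false := by
  simpa [sW_zero] using sW_two_mul_pow_add k 0 (by positivity)

noncomputable def qRec (n : ℕ) : ℕ :=
  if n = 0 then 0
  else if n ≤ 2 * 3 ^ Nat.log 3 n then 1
  else min (1 + qRec (n - 2 * 3 ^ Nat.log 3 n)) (1 + qRec (3 ^ (Nat.log 3 n + 1) - n))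
termination_by n
decreasing_by
  all_goals have := Nat.pow_log_le_self 3 (x := n) (by assumption)
  all_goals have := Nat.lt_pow_succ_log_self (b := 3) (by norm_num) n
  all_goals omega

lemma qRec_zero : qRec 0 = 0 := by
  rw [qRec]; simp

lemma qRec_eq_one (k n : ℕ) (h1 : 3 ^ k ≤ n) (h2 : n ≤ 2 * 3 ^ k) : qRec n = 1 := by
  have hpos : 0 < 3 ^ k := by positivity
  have hlog : Nat.log 3 n = k := Nat.log_eq_of_pow_le_of_lt_pow h1 (by rw [pow_succ]; omega)
  rw [qRec, if_neg (by omega), hlog, if_pos h2]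

lemma qRec_eq_min_of_lt (k n : ℕ) (h1 : 2 * 3 ^ k < n) (h2 : n < 3 ^ (k + 1)) :
    qRec n = min (1 + qRec (n - 2 * 3 ^ k)) (1 + qRec (3 ^ (k + 1) - n)) := by
  have hlog : Nat.log 3 n = k := Nat.log_eq_of_pow_le_of_lt_pow (by omega) h2
  rw [qRec, if_neg (by omega), hlog, if_neg (by omega)]

lemma qRec_eq_min (k n : ℕ) (h1 : 2 * 3 ^ k ≤ n) (h2 : n ≤ 3 ^ (k + 1)) :
    qRec n = min (1 + qRec (n - 2 * 3 ^ k)) (1 + qRec (3 ^ (k + 1) - n)) := by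
  have hpos : 0 < 3 ^ k := by positivity
  have hB := pow_succ 3 k
  rcases h1.eq_or_lt with rfl | h1
  · rw [qRec_eq_one k _ (by omega) le_rfl, Nat.sub_self, qRec_zero]
    omega
  rcases h2.eq_or_lt with rfl | h2
  · rw [qRec_eq_one (k + 1) _ le_rfl (by omega), Nat.sub_self, qRec_zero]
    omega
  exact qRec_eq_min_of_lt k n h1 h2

lemma one_le_qRec (n : ℕ) (hn : 0 < n) : 1 ≤ qRec n := by
  rw [qRec, if_neg (by omega)]
  split <;> omega

lemma qRec_pow_sub_le (k m : ℕ) (hm : m ≤ 3 ^ k) : qRec (3 ^ k - m) ≤ qRec m + 1 := by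
  induction k generalizing m with
  | zero =>
    interval_cases m
    · rw [qRec_eq_one 0 _ (by norm_num) (by norm_num)]; omega
    · simp [qRec_zero]
  | succ k ih =>
    have hpos : 0 < 3 ^ k := by positivity
    have hB := pow_succ 3 k
    rcases Nat.lt_or_ge m (3 ^ k) with hm1 | hm1
    · rw [qRec_eq_min k _ (by omega) (by omega), Nat.sub_sub_self hm]
      omega
    rcases le_or_gt m (2 * 3 ^ k) with hm2 | hm2
    · rw [qRec_eq_one k _ (by omega) (by omega)]
      omega
    have hmin := qRec_eq_min k m hm2.le hm
    have hrec := ih (m - 2 * 3 ^ k) (by omega)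
    rw [show 3 ^ k - (m - 2 * 3 ^ k) = 3 ^ (k + 1) - m by omega] at hrec
    omega

lemma qRec_eq_of_forall_sW_true (N x y : ℕ) (hxy : x ≤ y) (hy : y ≤ 3 ^ N)
    (hb : ∀ i, x ≤ i → i < y → sW i = true) : qRec x = qRec y := by
  induction N generalizing x y with
  | zero =>
    interval_cases y
    · interval_cases x; rfl
    · interval_cases x
      · simpa [sW_zero] using hb 0 le_rfl one_pos
      · rfl
  | succ k ih =>
    have hpos : 0 < 3 ^ k := by positivity
    have hB := pow_succ 3 k
    rcases le_or_gt y (3 ^ k) with hy1 | hy1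
    · exact ih x y hxy hy1 hb
    have hx1 : 3 ^ k ≤ x := by
      by_contra! hx1
      simpa [sW_pow_sub_one] using hb (3 ^ k - 1) (by omega) (by omega)
    rcases le_or_gt y (2 * 3 ^ k) with hy2 | hy2
    · rw [qRec_eq_one k x hx1 (by omega), qRec_eq_one k y hy1.le hy2]
    have hx2 : 2 * 3 ^ k ≤ x := by
      by_contra! hx2
      simpa [sW_two_mul_pow] using hb (2 * 3 ^ k) (by omega) (by omega)
    have hleft : qRec (x - 2 * 3 ^ k) = qRec (y - 2 * 3 ^ k) := by
      refine ih _ _ (by omega) (by omega) fun i hi1 hi2 => ?_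
      rw [← sW_two_mul_pow_add k i (by omega)]
      exact hb _ (by omega) (by omega)
    have hright : qRec (3 ^ (k + 1) - y) = qRec (3 ^ (k + 1) - x) := by
      refine ih _ _ (by omega) (by omega) fun i hi1 hi2 => ?_
      rw [← sW_pow_sub_one_sub (k + 1) i (by omega)]
      exact hb _ (by omega) (by omega)
    rw [qRec_eq_min k x hx2 (by omega), qRec_eq_min k y hy2.le hy, hleft, hright]

/-- `s[x..y)` (0-indexed, `y` excluded) is a palindrome. -/
def IsPalFactor (x y : ℕ) : Prop := ∀ i, x ≤ i → i < y → sW i = sW (x + y - 1 - i)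

lemma isPalFactor_of_add_eq_pow (k x y : ℕ) (h : x + y = 3 ^ k) :
    IsPalFactor x y := fun i _ hi => by
  rw [show x + y - 1 - i = 3 ^ k - 1 - i by omega, sW_pow_sub_one_sub k i (by omega)]

lemma isPalFactor_pow_sub (k x y : ℕ) (hy : y ≤ 3 ^ k) (h : IsPalFactor x y) :
    IsPalFactor (3 ^ k - y) (3 ^ k - x) := fun i hi1 hi2 => by
  rw [← sW_pow_sub_one_sub k i (by omega), h _ (by omega) (by omega),
    ← sW_pow_sub_one_sub k (x + y - 1 - (3 ^ k - 1 - i)) (by omega)]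
  congr 1
  omega

lemma isPalFactor_sub_two_mul_pow (k x y : ℕ) (hx : 2 * 3 ^ k ≤ x)
    (hy : y ≤ 3 ^ (k + 1)) (h : IsPalFactor x y) :
    IsPalFactor (x - 2 * 3 ^ k) (y - 2 * 3 ^ k) := fun i hi1 hi2 => by
  have hB := pow_succ 3 k
  rw [← sW_two_mul_pow_add k i (by omega), h _ (by omega) (by omega),
    ← sW_two_mul_pow_add k (x - 2 * 3 ^ k + (y - 2 * 3 ^ k) - 1 - i) (by omega)]
  congr 1
  omega

lemma exists_eq_pow_of_isPalFactor_zero (n : ℕ) (hn : 0 < n) (h : IsPalFactor 0 n) :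
    ∃ k, n = 3 ^ k := by
  set k := Nat.log 3 n
  have hlow : 3 ^ k ≤ n := Nat.pow_log_le_self 3 hn.ne'
  have hhigh : n < 3 ^ (k + 1) := Nat.lt_pow_succ_log_self (by norm_num) n
  have hB := pow_succ 3 k
  refine ⟨k, ?_⟩
  by_contra hne
  rcases le_or_gt n (2 * 3 ^ k) with h2 | h2
  · have hb := sW_of_mem_middle_third k (n - 1) (by omega) (by omega)
    rw [h _ (by omega) (by omega), show 0 + n - 1 - (n - 1) = 0 by omega, sW_zero] at hb
    exact Bool.false_ne_true hb
  · have hb := sW_of_mem_middle_third k (n - 3 ^ k) (by omega) (by omega)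
    rw [h _ (by omega) (by omega), show 0 + n - 1 - (n - 3 ^ k) = 3 ^ k - 1 by omega,
      sW_pow_sub_one] at hb
    exact Bool.false_ne_true hb

/-- The `i`-th letter (0-indexed) of `bᵉ s`. -/
def bsW (e i : ℕ) : Bool := if i < e then true else sW (i - e)

lemma exists_pow_of_bsW_symm (e m : ℕ) (he : 0 < e) (hm : 0 < m)
    (h : ∀ i < e + m, bsW e i = bsW e (e + m - 1 - i)) : ∃ k, m = 3 ^ k + e ∧ e ≤ 3 ^ k := by
  have hem : e < m := by
    by_contra! hem
    have ha := h e (by omega)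
    simp only [bsW, lt_irrefl, if_false, Nat.sub_self, sW_zero,
      if_pos (show e + m - 1 - e < e by omega)] at ha
    exact Bool.false_ne_true ha
  have hpal : IsPalFactor 0 (m - e) := fun i _ hi => by
    have hi' := h (e + i) (by omega)
    simp only [bsW, if_neg (show ¬ e + i < e by omega), if_neg (show ¬ e + m - 1 - (e + i) < e by omega),
      Nat.add_sub_cancel_left] at hi'
    rw [hi']
    congr 1
    omega
  obtain ⟨k, hk⟩ := exists_eq_pow_of_isPalFactor_zero (m - e) (by omega) hpal
  refine ⟨k, by omega, ?_⟩
  by_contra! hek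
  have ha := h (e + 2 * 3 ^ k) (by omega)
  simp only [bsW, if_neg (show ¬ e + 2 * 3 ^ k < e by omega),
    if_pos (show e + m - 1 - (e + 2 * 3 ^ k) < e by omega), Nat.add_sub_cancel_left,
    sW_two_mul_pow] at ha
  exact Bool.false_ne_true ha

section Near

variable {k x y : ℕ}

lemma qRec_near_of_isPalFactor_of_two_mul_pow_le
    (ih : ∀ x y, x ≤ y → y ≤ 3 ^ k → IsPalFactor x y →
      qRec y ≤ qRec x + 1 ∧ qRec x ≤ qRec y + 1)
    (hx : 2 * 3 ^ k ≤ x) (hxy : x ≤ y) (hy : y ≤ 3 ^ (k + 1)) (h : IsPalFactor x y) :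
    qRec y ≤ qRec x + 1 ∧ qRec x ≤ qRec y + 1 := by
  have hB := pow_succ 3 k
  have hshift := isPalFactor_sub_two_mul_pow k x y hx hy h
  have hleft := ih _ _ (by omega) (by omega) hshift
  have hright := ih _ _ (by omega) (by omega) (isPalFactor_pow_sub k _ _ (by omega) hshift)
  have hqx := qRec_eq_min k x hx (by omega)
  have hqy := qRec_eq_min k y (by omega) hy
  rw [show 3 ^ (k + 1) - x = 3 ^ k - (x - 2 * 3 ^ k) by omega] at hqx
  rw [show 3 ^ (k + 1) - y = 3 ^ k - (y - 2 * 3 ^ k) by omega] at hqy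
  omega

/-- The `b`-block `s[3^k..y)` is mirrored to `s[x..x+t)`; the part of the palindrome between
them is a shorter palindrome ending at `3^k`. -/
lemma qRec_near_of_isPalFactor_of_lt_pow_of_le_two_mul_pow
    (ih : ∀ x y, x ≤ y → y ≤ 3 ^ k → IsPalFactor x y →
      qRec y ≤ qRec x + 1 ∧ qRec x ≤ qRec y + 1)
    (hx : x < 3 ^ k) (hy1 : 3 ^ k < y) (hy2 : y ≤ 2 * 3 ^ k) (h : IsPalFactor x y) :
    qRec y ≤ qRec x + 1 ∧ qRec x ≤ qRec y + 1 := by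
  set t := y - 3 ^ k
  have hb : ∀ i, x ≤ i → i < x + t → sW i = true := fun i hi1 hi2 => by
    rw [h i hi1 (by omega)]
    exact sW_of_mem_middle_third k _ (by omega) (by omega)
  have hxt : x + t ≤ 3 ^ k := by
    by_contra! hxt
    simpa [sW_pow_sub_one] using hb (3 ^ k - 1) (by omega) (by omega)
  have hinner : IsPalFactor (x + t) (3 ^ k) := fun i hi1 hi2 => by
    rw [h i (by omega) (by omega)]
    congr 1
    omega
  have hnear := ih _ _ hxt le_rfl hinner
  have hblock := qRec_eq_of_forall_sW_true k x (x + t) (by omega) hxt hb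
  rw [qRec_eq_one k _ le_rfl (by omega)] at hnear
  rw [qRec_eq_one k y hy1.le hy2]
  omega

lemma qRec_near_of_isPalFactor_of_mem_middle_third
    (hx1 : 3 ^ k ≤ x) (hx2 : x < 2 * 3 ^ k) (hy1 : 2 * 3 ^ k < y) (hy2 : y ≤ 3 ^ (k + 1))
    (h : IsPalFactor x y) :
    qRec y ≤ qRec x + 1 ∧ qRec x ≤ qRec y + 1 := by
  have hB := pow_succ 3 k
  have hbs : ∀ i < 2 * 3 ^ k - x + (y - 2 * 3 ^ k), bsW (2 * 3 ^ k - x) i = sW (x + i) := by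
    intro i hi
    unfold bsW
    split_ifs with hlt
    · exact (sW_of_mem_middle_third k _ (by omega) (by omega)).symm
    · rw [← sW_two_mul_pow_add k _ (by omega)]
      congr 1
      omega
  obtain ⟨j, hj, hej⟩ := exists_pow_of_bsW_symm (2 * 3 ^ k - x) (y - 2 * 3 ^ k) (by omega)
    (by omega) fun i hi => by
      rw [hbs i hi, hbs _ (by omega), h _ (by omega) (by omega)]
      congr 1
      omega
  have hqy := qRec_eq_min k y hy1.le hy2
  rw [qRec_eq_one j (y - 2 * 3 ^ k) (by omega) (by omega)] at hqy
  have := one_le_qRec y (by omega)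
  rw [qRec_eq_one k x hx1 hx2.le]
  omega

/-- A palindrome overlapping all three thirds must be centred on the middle one. -/
lemma qRec_near_of_isPalFactor_of_lt_pow_of_two_mul_pow_lt
    (hx : x < 3 ^ k) (hy1 : 2 * 3 ^ k < y) (hy2 : y ≤ 3 ^ (k + 1)) (h : IsPalFactor x y) :
    qRec y ≤ qRec x + 1 ∧ qRec x ≤ qRec y + 1 := by
  have hB := pow_succ 3 k
  have hb : ∀ i, x + y - 2 * 3 ^ k ≤ i → i < x + y - 3 ^ k → sW i = true := fun i hi1 hi2 => by
    have := h (x + y - 1 - i) (by omega) (by omega)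
    rw [show x + y - 1 - (x + y - 1 - i) = i by omega] at this
    rw [← this]
    exact sW_of_mem_middle_third k _ (by omega) (by omega)
  have hsum : x + y = 3 ^ (k + 1) := by
    by_contra hne
    rcases Nat.lt_or_gt_of_ne hne with hlt | hgt
    · simpa [sW_pow_sub_one] using hb (3 ^ k - 1) (by omega) (by omega)
    · simpa [sW_two_mul_pow] using hb (2 * 3 ^ k) (by omega) (by omega)
  have hqy := qRec_eq_min k y hy1.le hy2
  have hmirror := qRec_pow_sub_le k (y - 2 * 3 ^ k) (by omega)
  rw [show 3 ^ (k + 1) - y = x by omega] at hqy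
  rw [show 3 ^ k - (y - 2 * 3 ^ k) = x by omega] at hmirror
  omega

end Near

lemma qRec_near_of_isPalFactor (x y : ℕ) (hxy : x ≤ y) (h : IsPalFactor x y) :
    qRec y ≤ qRec x + 1 ∧ qRec x ≤ qRec y + 1 := by
  suffices ∀ N x y, x ≤ y → y ≤ 3 ^ N → IsPalFactor x y →
      qRec y ≤ qRec x + 1 ∧ qRec x ≤ qRec y + 1 from
    this y x y hxy (Nat.lt_pow_self (by norm_num)).le h
  intro N
  induction N with
  | zero =>
    intro x y hxy hy _
    interval_cases y <;> interval_cases x <;> simp [qRec_zero, qRec_eq_one 0 1]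
  | succ k ih =>
    intro x y hxy hy h
    have hB := pow_succ 3 k
    rcases le_or_gt y (3 ^ k) with hy1 | hy1
    · exact ih x y hxy hy1 h
    rcases le_or_gt (2 * 3 ^ k) x with hx2 | hx2
    · exact qRec_near_of_isPalFactor_of_two_mul_pow_le ih hx2 hxy hy h
    rcases le_or_gt y (2 * 3 ^ k) with hy2 | hy2 <;> rcases le_or_gt (3 ^ k) x with hx1 | hx1
    · rw [qRec_eq_one k x hx1 (by omega), qRec_eq_one k y hy1.le hy2]
      omega
    · exact qRec_near_of_isPalFactor_of_lt_pow_of_le_two_mul_pow ih hx1 hy1 hy2 h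
    · exact qRec_near_of_isPalFactor_of_mem_middle_third hx1 hx2 hy2 hy h
    · exact qRec_near_of_isPalFactor_of_lt_pow_of_two_mul_pow_lt hx1 hy2 hy h

section PalindromicLength

variable {α : Type*}

lemma isPal_map_range_iff (g : ℕ → α) (n : ℕ) :
    IsPal ((List.range n).map g) ↔ ∀ i < n, g i = g (n - 1 - i) := by
  unfold IsPal
  constructor
  · intro h i hi
    have := List.getElem_of_eq h (by simpa using hi : i < ((List.range n).map g).reverse.length)
    simpa [List.getElem_reverse] using this.symm
  · intro h
    refine List.ext_getElem (by simp) fun i h₁ h₂ => ?_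
    simp only [List.getElem_reverse, List.getElem_map, List.getElem_range, List.length_map,
      List.length_range]
    simp only [List.length_map, List.length_range] at h₂
    rw [h i h₂]

lemma PL_flatten_le (l : List (List α)) (hl : ∀ p ∈ l, IsPal p) : PL l.flatten ≤ l.length :=
  Nat.sInf_le ⟨l, rfl, hl, rfl⟩

lemma exists_length_eq_PL (w : List α) :
    ∃ l : List (List α), l.length = PL w ∧ (∀ p ∈ l, IsPal p) ∧ l.flatten = w := by
  refine Nat.sInf_mem (s := {k | ∃ l : List (List α), l.length = k ∧ (∀ p ∈ l, IsPal p) ∧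
    l.flatten = w}) ⟨w.length, w.map ([·]), by simp, by simp [IsPal], ?_⟩
  induction w with
  | nil => rfl
  | cons c w ih => simp [ih]

lemma le_PL (w : List α) (m : ℕ)
    (h : ∀ l : List (List α), (∀ p ∈ l, IsPal p) → l.flatten = w → m ≤ l.length) : m ≤ PL w := by
  obtain ⟨l, hlen, hl, hw⟩ := exists_length_eq_PL w
  exact hlen ▸ h l hl hw

lemma PL_nil : PL ([] : List α) = 0 :=
  Nat.le_zero.mp (PL_flatten_le [] (by simp))

lemma PL_le_one (w : List α) (h : IsPal w) : PL w ≤ 1 := by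
  simpa using PL_flatten_le [w] (by simpa using h)

lemma PL_append_le (u v : List α) : PL (u ++ v) ≤ PL u + PL v := by
  obtain ⟨lu, hlu, hu, rfl⟩ := exists_length_eq_PL u
  obtain ⟨lv, hlv, hv, rfl⟩ := exists_length_eq_PL v
  rw [← List.flatten_append, ← hlu, ← hlv, ← List.length_append]
  exact PL_flatten_le _ fun p hp => (List.mem_append.mp hp).elim (hu p) (hv p)

end PalindromicLength

def sFactor (x d : ℕ) : List Bool := (List.range d).map fun i => sW (x + i)

lemma length_sPrefix (n : ℕ) : (sPrefix n).length = n := by simp [sPrefix]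

lemma length_sFactor (x d : ℕ) : (sFactor x d).length = d := by simp [sFactor]

lemma sPrefix_add (m d : ℕ) : sPrefix (m + d) = sPrefix m ++ sFactor m d := by
  simp [sPrefix, sFactor, List.range_add]

lemma isPal_sFactor_iff (x d : ℕ) : IsPal (sFactor x d) ↔ IsPalFactor x (x + d) := by
  rw [sFactor, isPal_map_range_iff]
  constructor
  · intro h i hi1 hi2
    have := h (i - x) (by omega)
    rwa [Nat.add_sub_cancel' hi1, show x + (d - 1 - (i - x)) = x + (x + d) - 1 - i by omega] at this
  · intro h i hi
    rw [h (x + i) (by omega) (by omega)]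
    congr 1
    omega

lemma replicate_append_sPrefix (e n : ℕ) :
    List.replicate e true ++ sPrefix n = (List.range (e + n)).map (bsW e) := by
  refine List.ext_getElem (by simp [length_sPrefix]) fun i h₁ _ => ?_
  simp only [List.getElem_map, List.getElem_range, bsW]
  split_ifs with hi
  · simp [List.getElem_append_left (by simpa using hi : i < (List.replicate e true).length)]
  · rw [List.getElem_append_right (by simpa using hi)]
    simp [sPrefix]

lemma qRec_le_one_of_isPal_replicate_append (e n : ℕ) (he : 0 < e)
    (h : IsPal (List.replicate e true ++ sPrefix n)) : qRec n ≤ 1 := by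
  rcases Nat.eq_zero_or_pos n with rfl | hn
  · simp [qRec_zero]
  rw [replicate_append_sPrefix, isPal_map_range_iff] at h
  obtain ⟨k, hk, hek⟩ := exists_pow_of_bsW_symm e n he hn h
  exact (qRec_eq_one k n (by omega) (by omega)).le

lemma qRec_le_length (j : ℕ) (l : List (List Bool)) (hl : ∀ p ∈ l, IsPal p) (n : ℕ)
    (h : l.flatten = List.replicate j true ++ sPrefix n) : qRec n ≤ l.length := by
  induction l using List.reverseRecOn generalizing n with
  | nil =>
    obtain rfl : n = 0 := by
      have := congrArg List.length h
      simp only [List.flatten_nil, List.length_nil, List.length_append, List.length_replicate,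
        length_sPrefix] at this
      omega
    simp [qRec_zero]
  | append_singleton l p ih =>
    simp only [List.flatten_append, List.flatten_singleton] at h
    have hlen := congrArg List.length h
    simp only [List.length_append, List.length_replicate, length_sPrefix] at hlen
    have hpal : IsPal p := hl p (by simp)
    rw [List.length_append, List.length_singleton]
    rcases le_or_gt p.length n with hp | hp
    · obtain ⟨m, rfl⟩ : ∃ m, n = m + p.length := ⟨n - p.length, by omega⟩
      rw [sPrefix_add, ← List.append_assoc] at h
      obtain ⟨hl', hp'⟩ := List.append_inj' h (length_sFactor _ _).symm
      rw [hp', isPal_sFactor_iff] at hpal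
      have hnear := qRec_near_of_isPalFactor m _ (by omega) hpal
      have := ih (fun q hq => hl q (by simp [hq])) m hl'
      omega
    · rw [show j = (j - (p.length - n)) + (p.length - n) by omega, List.replicate_add,
        List.append_assoc] at h
      obtain ⟨-, hp'⟩ := List.append_inj' h (by simp [length_sPrefix]; omega)
      rw [hp'] at hpal
      have := qRec_le_one_of_isPal_replicate_append _ n (by omega) hpal
      omega

lemma qRec_le_qj (j n : ℕ) : qRec n ≤ qj j n :=
  le_PL _ _ fun l hl h => qRec_le_length j l hl n h

lemma sFactor_eq_replicate (k x d : ℕ) (hx : 3 ^ k ≤ x) (hd : x + d ≤ 2 * 3 ^ k) :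
    sFactor x d = List.replicate d true :=
  List.eq_replicate_iff.mpr ⟨length_sFactor x d, by
    simp only [sFactor, List.mem_map, List.mem_range]
    rintro _ ⟨i, hi, rfl⟩
    exact sW_of_mem_middle_third k _ (by omega) (by omega)⟩

lemma sFactor_two_mul_pow (k m : ℕ) (hm : m ≤ 3 ^ k) : sFactor (2 * 3 ^ k) m = sPrefix m := by
  simp only [sFactor, sPrefix]
  exact List.map_congr_left fun i hi => sW_two_mul_pow_add k i (by simp at hi; omega)

lemma isPal_sPrefix_pow (k : ℕ) : IsPal (sPrefix (3 ^ k)) := by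
  simpa [sFactor, sPrefix] using
    (isPal_sFactor_iff 0 (3 ^ k)).mpr (isPalFactor_of_add_eq_pow k 0 (0 + 3 ^ k) (by simp))

lemma isPal_replicate_append_sPrefix_pow_append (e k : ℕ) :
    IsPal (List.replicate e true ++ sPrefix (3 ^ k) ++ List.replicate e true) := by
  have h : (sPrefix (3 ^ k)).reverse = sPrefix (3 ^ k) := isPal_sPrefix_pow k
  simp [IsPal, h, List.append_assoc]

lemma qj_le_one_of_mem_middle_third (k n : ℕ) (h1 : 3 ^ k ≤ n) (h2 : n ≤ 2 * 3 ^ k) :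
    qj (n - 3 ^ k) n ≤ 1 := by
  obtain ⟨e, rfl⟩ : ∃ e, n = 3 ^ k + e := ⟨n - 3 ^ k, by omega⟩
  rw [qj, sPrefix_add, sFactor_eq_replicate k _ _ le_rfl h2, Nat.add_sub_cancel_left,
    ← List.append_assoc]
  exact PL_le_one _ (isPal_replicate_append_sPrefix_pow_append e k)

lemma qj_two_mul_pow_add_le (k j m : ℕ) (hj : j ≤ 3 ^ k) (hm : m ≤ 3 ^ k) :
    qj (3 ^ k - j) (2 * 3 ^ k + m) ≤ qj j m + 1 := by
  have hsplit : List.replicate (3 ^ k - j) true ++ sPrefix (2 * 3 ^ k + m) =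
      (List.replicate (3 ^ k - j) true ++ sPrefix (3 ^ k) ++ List.replicate (3 ^ k - j) true) ++
        (List.replicate j true ++ sPrefix m) := by
    rw [two_mul, sPrefix_add, sPrefix_add, sFactor_eq_replicate k _ _ le_rfl (by omega),
      ← two_mul, sFactor_two_mul_pow k m hm, ← Nat.sub_add_cancel hj, List.replicate_add,
      Nat.sub_add_cancel hj]
    simp only [List.append_assoc]
  rw [qj, hsplit, add_comm (qj j m)]
  exact (PL_append_le _ _).trans
    (Nat.add_le_add_right (PL_le_one _ (isPal_replicate_append_sPrefix_pow_append _ k)) _)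

lemma qj_add_le_of_isPalFactor (j t d : ℕ) (h : IsPalFactor t (t + d)) :
    qj j (t + d) ≤ qj j t + 1 := by
  rw [qj, sPrefix_add, ← List.append_assoc]
  exact (PL_append_le _ _).trans
    (Nat.add_le_add_left (PL_le_one _ ((isPal_sFactor_iff t d).mpr h)) _)

/-- Keeping `j ≤ n` makes the first branch of the recursion applicable to the witness
for `n - 2·3^k`. -/
lemma exists_qj_le_qRec (n : ℕ) : ∃ j ≤ n, qj j n ≤ qRec n := by
  induction n using Nat.strong_induction_on with
  | _ n ih =>
  rcases Nat.eq_zero_or_pos n with rfl | hn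
  · exact ⟨0, le_rfl, by simp [qj, sPrefix, PL_nil, qRec_zero]⟩
  set k := Nat.log 3 n
  have hlow : 3 ^ k ≤ n := Nat.pow_log_le_self 3 hn.ne'
  have hhigh : n < 3 ^ (k + 1) := Nat.lt_pow_succ_log_self (by norm_num) n
  have hB := pow_succ 3 k
  rcases le_or_gt n (2 * 3 ^ k) with h2 | h2
  · exact ⟨n - 3 ^ k, by omega,
      (qRec_eq_one k n hlow h2).symm ▸ qj_le_one_of_mem_middle_third k n hlow h2⟩
  rw [qRec_eq_min k n h2.le hhigh.le]
  rcases min_cases (1 + qRec (n - 2 * 3 ^ k)) (1 + qRec (3 ^ (k + 1) - n)) with ⟨hmin, -⟩ | ⟨hmin, -⟩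
  · obtain ⟨j, hj, hq⟩ := ih (n - 2 * 3 ^ k) (by omega)
    refine ⟨3 ^ k - j, by omega, ?_⟩
    have := qj_two_mul_pow_add_le k j (n - 2 * 3 ^ k) (by omega) (by omega)
    rw [Nat.add_sub_cancel' h2.le] at this
    omega
  · obtain ⟨j, hj, hq⟩ := ih (3 ^ (k + 1) - n) (by omega)
    refine ⟨j, by omega, ?_⟩
    have := qj_add_le_of_isPalFactor j (3 ^ (k + 1) - n) (n - (3 ^ (k + 1) - n))
      (isPalFactor_of_add_eq_pow (k + 1) _ _ (by omega))
    rw [Nat.add_sub_cancel' (by omega)] at this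
    omega

lemma qS_eq_qRec (n : ℕ) : qS n = qRec n := by
  obtain ⟨j, hj⟩ : qS n ∈ Set.range fun j => qj j n := Nat.sInf_mem (Set.range_nonempty _)
  obtain ⟨i, -, hi⟩ := exists_qj_le_qRec n
  exact le_antisymm ((Nat.sInf_le (Set.mem_range_self i)).trans hi) (hj ▸ qRec_le_qj j n)

/-- The recursion for q: q(0) = 0; q(n) = 1 for n = 1 or 3ᵏ ≤ n ≤ 2·3ᵏ; and
q(n) = min(1 + q(n − 2·3ᵏ), 1 + q(3ᵏ⁺¹ − n)) for 2·3ᵏ < n ≤ 3ᵏ⁺¹. -/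
theorem q_recursion :
    qS 0 = 0 ∧
    qS 1 = 1 ∧
    (∀ k n : ℕ, 3 ^ k ≤ n → n ≤ 2 * 3 ^ k → qS n = 1) ∧
    (∀ k n : ℕ, 2 * 3 ^ k < n → n ≤ 3 ^ (k + 1) →
      qS n = min (1 + qS (n - 2 * 3 ^ k)) (1 + qS (3 ^ (k + 1) - n))) := by
  simp only [qS_eq_qRec]
  exact ⟨qRec_zero, qRec_eq_one 0 1 le_rfl (by norm_num), qRec_eq_one,
    fun k n h1 h2 => qRec_eq_min k n h1.le h2⟩
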